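/- arXiv:2503.13747 — 8 statements merged into one kernel-verified Lean document; each statement's English description precedes it below -/
import Mathlib

section
/- Let L(k) = L + kE be a family of n×n real matrices where L and E are connection matrices (off-diagonal entries nonnegative, columns summing to zero), with L(k) irreducible. Let R be a real diagonal matrix and let ρ(k) = s(L(k)+R) be the spectral bound with normalized positive eigenvector x(k) satisfying (L(k)+R)x = ρ(k)x. Suppose there exists a vector v ∈ ℝⁿ with positive entries such that v_i(ℓ_{ij}+k e_{ij}) = v_j(ℓ_{ji}+k e_{ji}) for all i,j (i.e. diag(v)·L(k) is symmetric). Then ρ'(k) = ((E x ∘ x)·v)/((x ∘ x)·v), where ∘ denotes the Hadamard (componentwise) product. -/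
open Matrix

/-- Spectral bound: maximum real part of the (complex) eigenvalues. -/
noncomputable def specBound {n : ℕ} (M : Matrix (Fin n) (Fin n) ℝ) : ℝ :=
  sSup {t : ℝ | ∃ μ ∈ spectrum ℂ (M.map Complex.ofReal), μ.re = t}

/-- Irreducibility of a matrix (no nontrivial invariant subset of indices). -/
def MatIrreducible {n : ℕ} (M : Matrix (Fin n) (Fin n) ℝ) : Prop :=
  ∀ S : Finset (Fin n), S.Nonempty → S ≠ Finset.univ →
    ∃ i ∈ S, ∃ j, j ∉ S ∧ M j i ≠ 0

/-!
A Hellmann–Feynman argument. Differentiating `(A + k • E) x(k) = ρ(k) x(k)` gives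
`E x + (A + k • E) x' = ρ' x + ρ x'`. Pair both sides with `x` in the weighted form
`⟪y, z⟫ = y ⬝ᵥ diagonal v *ᵥ z`. Since `diagonal v * (A + k • E)` is symmetric,
`⟪x, (A + k • E) x'⟫ = ⟪(A + k • E) x, x'⟫ = ρ ⟪x, x'⟫`, so the terms in `x'` cancel and
`ρ' ⟪x, x⟫ = ⟪x, E x⟫`. Positivity of `x` and `v` makes `⟪x, x⟫ ≠ 0`.
-/

theorem Matrix.IsSymm.dotProduct_mulVec_comm {ι R : Type*} [Fintype ι] [CommSemiring R]
    {S : Matrix ι ι R} (hS : S.IsSymm) (y z : ι → R) : y ⬝ᵥ S *ᵥ z = z ⬝ᵥ S *ᵥ y := by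
  rw [dotProduct_mulVec, ← mulVec_transpose, hS.eq, dotProduct_comm]

theorem isSymm_diagonal_mul_add_diagonal {ι R : Type*} [Fintype ι] [DecidableEq ι] [Semiring R]
    (v r : ι → R) {M : Matrix ι ι R} (hM : (diagonal v * M).IsSymm) :
    (diagonal v * (M + diagonal r)).IsSymm := by
  rw [mul_add, diagonal_mul_diagonal]
  exact hM.add (isSymm_diagonal _)

section Derivative

variable {𝕜 ι : Type*} [NontriviallyNormedField 𝕜] [Fintype ι] {x : 𝕜 → ι → 𝕜} {x' : ι → 𝕜}
  {k₀ : 𝕜}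

theorem HasDerivAt.const_mulVec (M : Matrix ι ι 𝕜) (hx : HasDerivAt x x' k₀) :
    HasDerivAt (fun k => M *ᵥ x k) (M *ᵥ x') k₀ :=
  hasDerivAt_pi.2 fun i => by
    simpa only [mulVec, dotProduct] using
      HasDerivAt.fun_sum fun j _ => (hasDerivAt_pi.1 hx j).const_mul (M i j)

theorem HasDerivAt.add_smul_mulVec (A E : Matrix ι ι 𝕜) (hx : HasDerivAt x x' k₀) :
    HasDerivAt (fun k => (A + k • E) *ᵥ x k) (E *ᵥ x k₀ + (A + k₀ • E) *ᵥ x') k₀ := by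
  have hfun : (fun k => (A + k • E) *ᵥ x k) = fun k => A *ᵥ x k + k • E *ᵥ x k := by
    funext k
    rw [add_mulVec, smul_mulVec]
  rw [hfun]
  refine ((hx.const_mulVec A).add
    ((hasDerivAt_id' k₀).fun_smul (hx.const_mulVec E))).congr_deriv ?_
  rw [add_mulVec, smul_mulVec, one_smul]
  abel

theorem hellmann_feynman [DecidableEq ι] (A E : Matrix ι ι 𝕜) (v : ι → 𝕜) {ρ : 𝕜 → 𝕜} {ρ' : 𝕜}
    (hsymm : (diagonal v * (A + k₀ • E)).IsSymm)
    (heig : ∀ k, (A + k • E) *ᵥ x k = ρ k • x k)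
    (hρ : HasDerivAt ρ ρ' k₀) (hx : HasDerivAt x x' k₀) :
    ρ' * (x k₀ ⬝ᵥ diagonal v *ᵥ x k₀) = x k₀ ⬝ᵥ diagonal v *ᵥ (E *ᵥ x k₀) := by
  have hderiv : E *ᵥ x k₀ + (A + k₀ • E) *ᵥ x' = ρ k₀ • x' + ρ' • x k₀ := by
    have h := hx.add_smul_mulVec A E
    rw [funext heig] at h
    exact h.unique (hρ.fun_smul hx)
  have hself : x k₀ ⬝ᵥ diagonal v *ᵥ ((A + k₀ • E) *ᵥ x') =
      ρ k₀ * (x k₀ ⬝ᵥ diagonal v *ᵥ x') := by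
    rw [mulVec_mulVec, hsymm.dotProduct_mulVec_comm, ← mulVec_mulVec, heig, mulVec_smul,
      dotProduct_smul, smul_eq_mul, (isSymm_diagonal v).dotProduct_mulVec_comm]
  have h := congrArg (x k₀ ⬝ᵥ diagonal v *ᵥ ·) hderiv
  simp only [mulVec_add, dotProduct_add, mulVec_smul, dotProduct_smul, smul_eq_mul, hself] at h
  linear_combination -h

end Derivative

theorem dotProduct_diagonal_mulVec {ι R : Type*} [Fintype ι] [DecidableEq ι] [CommSemiring R]
    (v y z : ι → R) :
    y ⬝ᵥ diagonal v *ᵥ z = ∑ i, z i * y i * v i := by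
  simp only [dotProduct, mulVec_diagonal]
  exact Finset.sum_congr rfl fun i _ => by ring

theorem rho_deriv_formula_general {n : ℕ} (hn : 0 < n)
    (L E : Matrix (Fin n) (Fin n) ℝ)
    (r : Fin n → ℝ) (v : Fin n → ℝ) (hv : ∀ i, 0 < v i)
    (hsym : ∀ k : ℝ, 0 ≤ k → ∀ i j, v i * (L i j + k * E i j) = v j * (L j i + k * E j i))
    (ρ : ℝ → ℝ) (x : ℝ → Fin n → ℝ) (hx : ∀ k i, 0 < x k i)
    (heig : ∀ k : ℝ, (L + k • E + Matrix.diagonal r).mulVec (x k) = ρ k • x k)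
    (k₀ : ℝ) (hk₀ : 0 ≤ k₀) (ρ'v : ℝ) (x' : Fin n → ℝ)
    (hρ' : HasDerivAt ρ ρ'v k₀)
    (hx' : ∀ i, HasDerivAt (fun k => x k i) (x' i) k₀) :
    ρ'v = (∑ i, (E.mulVec (x k₀)) i * x k₀ i * v i) /
      (∑ i, x k₀ i * x k₀ i * v i) := by
  have hsymm : (diagonal v * (L + diagonal r + k₀ • E)).IsSymm := by
    rw [add_right_comm]
    refine isSymm_diagonal_mul_add_diagonal v r (IsSymm.ext fun i j => ?_)
    simpa [diagonal_mul] using hsym k₀ hk₀ j i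
  have heig' : ∀ k, (L + diagonal r + k • E) *ᵥ x k = ρ k • x k := fun k => by
    rw [add_right_comm]
    exact heig k
  have hpos : 0 < ∑ i, x k₀ i * x k₀ i * v i :=
    Finset.sum_pos (fun i _ => by have := hx k₀ i; have := hv i; positivity)
      ⟨⟨0, hn⟩, Finset.mem_univ _⟩
  rw [eq_div_iff hpos.ne', ← dotProduct_diagonal_mulVec, ← dotProduct_diagonal_mulVec]
  exact hellmann_feynman _ E v hsymm heig' hρ' (hasDerivAt_pi.2 hx')

/-- For the family `L(k) = L + kE` of connection matrices with a
symmetrizing positive vector `v`, the derivative of the spectral bound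
`ρ(k) = s(L(k)+R)` satisfies `ρ'(k) = ((E x ∘ x)·v)/((x ∘ x)·v)`. -/
theorem rho_deriv_formula {n : ℕ} (hn : 0 < n)
    (L E : Matrix (Fin n) (Fin n) ℝ)
    (hLoff : ∀ i j, i ≠ j → 0 ≤ L i j) (hLcol : ∀ j, ∑ i, L i j = 0)
    (hEoff : ∀ i j, i ≠ j → 0 ≤ E i j) (hEcol : ∀ j, ∑ i, E i j = 0)
    (hirr : ∀ k : ℝ, 0 ≤ k → MatIrreducible (L + k • E))
    (r : Fin n → ℝ) (v : Fin n → ℝ) (hv : ∀ i, 0 < v i)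
    (hsym : ∀ k : ℝ, 0 ≤ k → ∀ i j, v i * (L i j + k * E i j) = v j * (L j i + k * E j i))
    (ρ : ℝ → ℝ) (x : ℝ → Fin n → ℝ) (hx : ∀ k i, 0 < x k i)
    (hρspec : ∀ k : ℝ, 0 ≤ k → ρ k = specBound (L + k • E + Matrix.diagonal r))
    (heig : ∀ k : ℝ, (L + k • E + Matrix.diagonal r).mulVec (x k) = ρ k • x k)
    (k₀ : ℝ) (hk₀ : 0 ≤ k₀) (ρ'v : ℝ) (x' : Fin n → ℝ)
    (hρ' : HasDerivAt ρ ρ'v k₀)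
    (hx' : ∀ i, HasDerivAt (fun k => x k i) (x' i) k₀) :
    ρ'v = (∑ i, (E.mulVec (x k₀)) i * x k₀ i * v i) /
      (∑ i, x k₀ i * x k₀ i * v i) :=
  rho_deriv_formula_general hn L E r v hv hsym ρ x hx heig k₀ hk₀ ρ'v x' hρ' hx'
end

section
/- Suppose P and Q are n×n real matrices, P is essentially nonnegative (all off-diagonal entries nonnegative), Q is nonnegative and nonzero, and P + Q is irreducible. Then s(P+Q) > s(P), where s(·) denotes the spectral bound (maximum of the real parts of eigenvalues). -/
/-!
Adding `c • 1` shifts every eigenvalue by `c`, so after a shift making `P` nonnegative it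
suffices to compare nonnegative matrices `A ≤ B`, `A ≠ B`, with `B` irreducible.
Since `(1 + B) ^ (n - 1)` maps nonzero nonnegative vectors to positive ones and commutes with
`B`, a maximiser of the Collatz–Wielandt function `x ↦ minᵢ (B x)ᵢ / xᵢ` over the image of the
simplex is a positive eigenvector; applied to `Bᵀ` this gives `w > 0` with `wᵀ B = r wᵀ`.
If `A v = μ v`, then `u = |v|` satisfies `|μ| u ≤ A u ≤ B u`, and pairing with `w` gives
`|μ| ≤ r`. Equality would make `u` a nonnegative, hence positive, eigenvector of `B` with
`A u = B u`, forcing `A = B`. So `Re μ ≤ |μ| < r ≤ s(B)`.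
-/

open Matrix

variable {ι : Type*} [Fintype ι]

section NonnegMatrix

variable {A B : Matrix ι ι ℝ} {u : ι → ℝ}

lemma dotProduct_lt_dotProduct_of_pos_left {w x y : ι → ℝ} (hw : ∀ i, 0 < w i) (hxy : x ≤ y)
    (hne : x ≠ y) : w ⬝ᵥ x < w ⬝ᵥ y := by
  obtain ⟨i, hi⟩ := Function.ne_iff.mp hne
  exact Finset.sum_lt_sum (fun j _ => mul_le_mul_of_nonneg_left (hxy j) (hw j).le)
    ⟨i, Finset.mem_univ _, mul_lt_mul_of_pos_left ((hxy i).lt_of_ne hi) (hw i)⟩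

lemma mulVec_nonneg (hA : ∀ i j, 0 ≤ A i j) (hu : 0 ≤ u) : 0 ≤ A *ᵥ u :=
  fun i => Finset.sum_nonneg fun j _ => mul_nonneg (hA i j) (hu j)

lemma mulVec_le_mulVec_of_le (hAB : ∀ i j, A i j ≤ B i j) (hu : 0 ≤ u) : A *ᵥ u ≤ B *ᵥ u :=
  fun i => Finset.sum_le_sum fun j _ => mul_le_mul_of_nonneg_right (hAB i j) (hu j)

lemma mul_le_mulVec (hA : ∀ i j, 0 ≤ A i j) (hu : 0 ≤ u) (i j : ι) : A i j * u j ≤ (A *ᵥ u) i :=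
  Finset.single_le_sum (fun k _ => mul_nonneg (hA i k) (hu k)) (Finset.mem_univ j)

lemma le_one_add_mulVec [DecidableEq ι] (hB : ∀ i j, 0 ≤ B i j) (hu : 0 ≤ u) :
    u ≤ (1 + B) *ᵥ u := by
  simpa [add_mulVec] using mulVec_nonneg hB hu

lemma eq_of_mulVec_eq_of_le (hAB : ∀ i j, A i j ≤ B i j) (hu : ∀ i, 0 < u i)
    (h : A *ᵥ u = B *ᵥ u) : A = B := by
  ext i j
  have hrow : ∑ k, (B i k - A i k) * u k = 0 := by
    simp only [sub_mul, Finset.sum_sub_distrib]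
    exact sub_eq_zero.mpr (congrFun h i).symm
  have hterm := (Finset.sum_eq_zero_iff_of_nonneg fun k _ =>
    mul_nonneg (sub_nonneg.mpr (hAB i k)) (hu k).le).mp hrow j (Finset.mem_univ j)
  linarith [(mul_eq_zero.mp hterm).resolve_right (hu j).ne']

lemma exists_nonneg_add_smul_one [DecidableEq ι] {P : Matrix ι ι ℝ}
    (hP : ∀ i j, i ≠ j → 0 ≤ P i j) : ∃ c : ℝ, ∀ i j, 0 ≤ (P + c • 1) i j := by
  refine ⟨∑ k, |P k k|, fun i j => ?_⟩
  rcases eq_or_ne i j with rfl | hij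
  · have := Finset.single_le_sum (fun k _ => abs_nonneg (P k k)) (Finset.mem_univ i)
    simp only [Matrix.add_apply, Matrix.smul_apply, one_apply_eq, smul_eq_mul, mul_one]
    linarith [neg_abs_le (P i i)]
  · simpa [one_apply_ne hij] using hP i j hij

lemma norm_smul_le_mulVec_norm (hA : ∀ i j, 0 ≤ A i j) {v : ι → ℂ} {μ : ℂ}
    (hv : A.map Complex.ofReal *ᵥ v = μ • v) :
    ‖μ‖ • (fun i => ‖v i‖) ≤ A *ᵥ fun i => ‖v i‖ := by
  intro i
  calc ‖μ‖ * ‖v i‖ = ‖∑ j, (A i j : ℂ) * v j‖ := by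
        rw [← norm_mul, ← smul_eq_mul, ← Pi.smul_apply, ← hv]; rfl
    _ ≤ ∑ j, ‖(A i j : ℂ) * v j‖ := norm_sum_le _ _
    _ = (A *ᵥ fun i => ‖v i‖) i := by
        refine Finset.sum_congr rfl fun j _ => ?_
        rw [norm_mul, Complex.norm_real, Real.norm_of_nonneg (hA i j)]

end NonnegMatrix

section Spectrum

variable [DecidableEq ι] {K : Type*} [Field K] {M : Matrix ι ι K} {μ : K}

lemma exists_mulVec_eq_smul_of_mem_spectrum (h : μ ∈ spectrum K M) :
    ∃ v ≠ 0, M *ᵥ v = μ • v := by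
  rw [mem_spectrum_iff_isRoot_charpoly, Polynomial.IsRoot.def, eval_charpoly,
    ← exists_mulVec_eq_zero_iff] at h
  obtain ⟨v, hv, hMv⟩ := h
  refine ⟨v, hv, ?_⟩
  rwa [sub_mulVec, scalar_apply, ← smul_one_eq_diagonal, smul_mulVec, one_mulVec, sub_eq_zero,
    eq_comm] at hMv

lemma mem_spectrum_of_vecMul_eq_smul {v : ι → K} (hv : v ≠ 0) (h : v ᵥ* M = μ • v) :
    μ ∈ spectrum K M := by
  rw [mem_spectrum_iff_isRoot_charpoly, Polynomial.IsRoot.def, eval_charpoly,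
    ← exists_vecMul_eq_zero_iff]
  refine ⟨v, hv, ?_⟩
  rw [vecMul_sub, scalar_apply, ← smul_one_eq_diagonal, vecMul_smul, vecMul_one, h, sub_self]

lemma ofReal_mem_spectrum_map {A : Matrix ι ι ℝ} {r : ℝ} (h : r ∈ spectrum ℝ A) :
    (r : ℂ) ∈ spectrum ℂ (A.map Complex.ofReal) := by
  rw [mem_spectrum_iff_isRoot_charpoly] at h ⊢
  rw [show A.map Complex.ofReal = A.map Complex.ofRealHom from rfl, charpoly_map]
  exact h.map

end Spectrum

section SpecBound

variable {n : ℕ}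

open scoped Pointwise

lemma specBound_eq_sSup_re (M : Matrix (Fin n) (Fin n) ℝ) :
    specBound M = sSup (Complex.re '' spectrum ℂ (M.map Complex.ofReal)) :=
  rfl

lemma bddAbove_re_spectrum (M : Matrix (Fin n) (Fin n) ℝ) :
    BddAbove (Complex.re '' spectrum ℂ (M.map Complex.ofReal)) :=
  ((finite_spectrum _).image _).bddAbove

lemma re_le_specBound (M : Matrix (Fin n) (Fin n) ℝ) {μ : ℂ}
    (hμ : μ ∈ spectrum ℂ (M.map Complex.ofReal)) : μ.re ≤ specBound M :=
  le_csSup (bddAbove_re_spectrum M) ⟨μ, hμ, rfl⟩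

lemma spectrum_map_nonempty (hn : 0 < n) (M : Matrix (Fin n) (Fin n) ℝ) :
    (spectrum ℂ (M.map Complex.ofReal)).Nonempty :=
  have : Nonempty (Fin n) := Fin.pos_iff_nonempty.mp hn
  spectrum.nonempty_of_isAlgClosed_of_finiteDimensional ℂ _

lemma exists_re_eq_specBound (hn : 0 < n) (M : Matrix (Fin n) (Fin n) ℝ) :
    ∃ μ ∈ spectrum ℂ (M.map Complex.ofReal), μ.re = specBound M :=
  ((spectrum_map_nonempty hn M).image _).csSup_mem ((finite_spectrum _).image _)

lemma specBound_add_smul_one (hn : 0 < n) (M : Matrix (Fin n) (Fin n) ℝ) (c : ℝ) :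
    specBound (M + c • 1) = specBound M + c := by
  have hmap :
      (M + c • 1).map Complex.ofReal = M.map Complex.ofReal + algebraMap ℂ _ (c : ℂ) := by
    rw [Matrix.algebraMap_eq_diagonal]
    ext i j
    rcases eq_or_ne i j with rfl | h <;> simp [*, one_apply]
  have hre : Complex.re '' (spectrum ℂ (M.map Complex.ofReal) + {(c : ℂ)})
      = Complex.re '' spectrum ℂ (M.map Complex.ofReal) + ({c} : Set ℝ) := by
    simp only [Set.add_singleton, Set.image_image, Complex.add_re, Complex.ofReal_re]
  rw [specBound_eq_sSup_re, specBound_eq_sSup_re, hmap, ← spectrum.add_singleton_eq, hre,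
    csSup_add ((spectrum_map_nonempty hn M).image _) (bddAbove_re_spectrum M)
      (Set.singleton_nonempty _) bddAbove_singleton, csSup_singleton]

end SpecBound

section Irreducible

variable {n : ℕ} {B : Matrix (Fin n) (Fin n) ℝ} {u : Fin n → ℝ}

lemma MatIrreducible.transpose (h : MatIrreducible B) : MatIrreducible Bᵀ := by
  intro S hS hSu
  obtain ⟨i, hi, j, hj, hji⟩ :=
    h Sᶜ (Finset.nonempty_iff_ne_empty.mpr ((Finset.compl_eq_empty_iff S).not.mpr hSu))
      ((Finset.compl_ne_univ_iff_nonempty S).mpr hS)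
  exact ⟨j, by simpa using hj, i, Finset.mem_compl.mp hi, hji⟩

lemma MatIrreducible.add_smul_one (h : MatIrreducible B) (c : ℝ) :
    MatIrreducible (B + c • 1) := by
  intro S hS hSu
  obtain ⟨i, hi, j, hj, hji⟩ := h S hS hSu
  have hne : j ≠ i := fun hij => hj (hij ▸ hi)
  exact ⟨i, hi, j, hj, by simpa [one_apply_ne hne] using hji⟩

lemma MatIrreducible.exists_eq_zero_mulVec_pos (hB : ∀ i j, 0 ≤ B i j) (h : MatIrreducible B)
    (hu : 0 ≤ u) (hu0 : u ≠ 0) (hpos : ¬∀ i, 0 < u i) : ∃ j, u j = 0 ∧ 0 < (B *ᵥ u) j := by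
  obtain ⟨i, hi⟩ := (Pi.lt_def.mp (hu.lt_of_ne' hu0)).2
  obtain ⟨i, hi, j, hj, hji⟩ := h (Finset.univ.filter fun i => 0 < u i) ⟨i, by simpa using hi⟩
    (fun huniv => hpos (by simpa [Finset.filter_eq_self] using huniv))
  simp only [Finset.mem_filter, Finset.mem_univ, true_and] at hi hj
  exact ⟨j, le_antisymm (not_lt.mp hj) (hu j),
    (mul_pos ((hB j i).lt_of_ne' hji) hi).trans_le (mul_le_mulVec hB hu j i)⟩

lemma MatIrreducible.pos_of_mulVec_eq_smul (hB : ∀ i j, 0 ≤ B i j) (h : MatIrreducible B)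
    (hu : 0 ≤ u) (hu0 : u ≠ 0) {t : ℝ} (hBu : B *ᵥ u = t • u) : ∀ i, 0 < u i := by
  by_contra hpos
  obtain ⟨j, hj, hBj⟩ := h.exists_eq_zero_mulVec_pos hB hu hu0 hpos
  simp [hBu, hj] at hBj

lemma MatIrreducible.card_pos_lt_card_pos_one_add_mulVec (hB : ∀ i j, 0 ≤ B i j)
    (h : MatIrreducible B) (hu : 0 ≤ u) (hu0 : u ≠ 0) (hpos : ¬∀ i, 0 < u i) :
    (Finset.univ.filter fun i => 0 < u i).card
      < (Finset.univ.filter fun i => 0 < ((1 + B) *ᵥ u) i).card := by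
  have hle := le_one_add_mulVec hB hu
  obtain ⟨j, hj, hBj⟩ := h.exists_eq_zero_mulVec_pos hB hu hu0 hpos
  refine Finset.card_lt_card ((Finset.ssubset_iff_of_subset ?_).mpr ⟨j, ?_, ?_⟩)
  · intro i
    simpa using fun hi => hi.trans_le (hle i)
  · simpa [add_mulVec, hj] using hBj
  · simp [hj]

lemma MatIrreducible.pow_mulVec_pos_of_le (hB : ∀ i j, 0 ≤ B i j) (h : MatIrreducible B)
    (k : ℕ) (hu : 0 ≤ u) (hu0 : u ≠ 0)
    (hk : n ≤ k + (Finset.univ.filter fun i => 0 < u i).card) :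
    ∀ i, 0 < ((1 + B) ^ k *ᵥ u) i := by
  induction k generalizing u with
  | zero =>
    have hcard : (Finset.univ.filter fun i => 0 < u i).card = Fintype.card (Fin n) :=
      (Finset.card_le_univ _).antisymm (by simpa using hk)
    simpa [Finset.filter_eq_self] using Finset.eq_univ_of_card _ hcard
  | succ k ih =>
    rw [pow_succ, ← mulVec_mulVec]
    have hle := le_one_add_mulVec hB hu
    refine ih (hu.trans hle) (fun h0 => hu0 (le_antisymm (h0 ▸ hle) hu)) ?_
    by_cases hpos : ∀ i, 0 < u i
    · have : (Finset.univ.filter fun i => 0 < ((1 + B) *ᵥ u) i) = Finset.univ :=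
        Finset.filter_true_of_mem fun i _ => (hpos i).trans_le (hle i)
      simp [this]
    · have := h.card_pos_lt_card_pos_one_add_mulVec hB hu hu0 hpos
      omega

lemma MatIrreducible.pow_sub_one_mulVec_pos (hB : ∀ i j, 0 ≤ B i j) (h : MatIrreducible B)
    (hu : 0 ≤ u) (hu0 : u ≠ 0) : ∀ i, 0 < ((1 + B) ^ (n - 1) *ᵥ u) i := by
  obtain ⟨i, hi⟩ := (Pi.lt_def.mp (hu.lt_of_ne' hu0)).2
  have : 0 < (Finset.univ.filter fun i => 0 < u i).card :=
    Finset.card_pos.mpr ⟨i, by simpa using hi⟩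
  exact h.pow_mulVec_pos_of_le hB (n - 1) hu hu0 (by omega)

end Irreducible

section CollatzWielandt

lemma ne_zero_of_mem_stdSimplex {u : ι → ℝ} (hu : u ∈ stdSimplex ℝ ι) : u ≠ 0 := by
  rintro rfl
  simpa using hu.2

variable [Nonempty ι] {B C : Matrix ι ι ℝ}

noncomputable def collatzWielandt (B : Matrix ι ι ℝ) (x : ι → ℝ) : ℝ :=
  Finset.univ.inf' Finset.univ_nonempty fun i => (B *ᵥ x) i / x i

lemma collatzWielandt_smul_le_mulVec {x : ι → ℝ} (hx : ∀ i, 0 < x i) :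
    collatzWielandt B x • x ≤ B *ᵥ x := fun i =>
  (le_div_iff₀ (hx i)).mp (Finset.inf'_le _ (Finset.mem_univ i))

lemma lt_collatzWielandt {x : ι → ℝ} (hx : ∀ i, 0 < x i) {t : ℝ}
    (h : ∀ i, t * x i < (B *ᵥ x) i) : t < collatzWielandt B x :=
  (Finset.lt_inf'_iff _).mpr fun i _ => (lt_div_iff₀ (hx i)).mpr (h i)

lemma inv_sum_smul_mem_stdSimplex {w : ι → ℝ} (hw : ∀ i, 0 < w i) :
    (∑ i, w i)⁻¹ • w ∈ stdSimplex ℝ ι := by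
  have hs : 0 < ∑ i, w i := Finset.sum_pos (fun i _ => hw i) Finset.univ_nonempty
  refine ⟨fun i => smul_nonneg (inv_nonneg.mpr hs.le) (hw i).le, ?_⟩
  simp only [Pi.smul_apply, smul_eq_mul, ← Finset.mul_sum, inv_mul_cancel₀ hs.ne']

lemma continuousOn_collatzWielandt_mulVec
    (hC : ∀ u, 0 ≤ u → u ≠ 0 → ∀ i, 0 < (C *ᵥ u) i) :
    ContinuousOn (fun u => collatzWielandt B (C *ᵥ u)) (stdSimplex ℝ ι) := by
  exact ContinuousOn.finset_inf'_apply _ fun i _ =>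
    ContinuousOn.div (by fun_prop) (by fun_prop) fun u hu =>
      (hC u hu.1 (ne_zero_of_mem_stdSimplex hu) i).ne'

lemma mulVec_eq_smul_of_isMaxOn
    (hC : ∀ u, 0 ≤ u → u ≠ 0 → ∀ i, 0 < (C *ᵥ u) i) (hBC : Commute B C) {u₀ : ι → ℝ}
    (hu₀ : u₀ ∈ stdSimplex ℝ ι)
    (hmax : IsMaxOn (fun u => collatzWielandt B (C *ᵥ u)) (stdSimplex ℝ ι) u₀) :
    B *ᵥ C *ᵥ u₀ = collatzWielandt B (C *ᵥ u₀) • C *ᵥ u₀ := by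
  set w := C *ᵥ u₀
  set r := collatzWielandt B w
  have hw : ∀ i, 0 < w i := hC u₀ hu₀.1 (ne_zero_of_mem_stdSimplex hu₀)
  by_contra hne
  have hCx := hC (B *ᵥ w - r • w) (sub_nonneg.mpr (collatzWielandt_smul_le_mulVec hw))
    (sub_ne_zero.mpr hne)
  -- `C` turns the nonzero gap `B w - r w ≥ 0` into a positive one, so `u₁` beats `u₀`
  set u₁ := (∑ i, w i)⁻¹ • w
  have hu₁ := inv_sum_smul_mem_stdSimplex hw
  have hCu₁ : ∀ i, 0 < (C *ᵥ u₁) i := hC u₁ hu₁.1 (ne_zero_of_mem_stdSimplex hu₁)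
  have hgap : B *ᵥ C *ᵥ u₁ - r • C *ᵥ u₁ = (∑ i, w i)⁻¹ • C *ᵥ (B *ᵥ w - r • w) := by
    simp only [u₁, mulVec_smul, mulVec_sub, mulVec_mulVec, hBC.eq, smul_sub, smul_comm r]
  refine (hmax hu₁).not_gt (lt_collatzWielandt hCu₁ fun i => sub_pos.mp ?_)
  have := congrFun hgap i
  simp only [Pi.sub_apply, Pi.smul_apply, smul_eq_mul] at this
  rw [this]
  exact mul_pos (inv_pos.mpr (Finset.sum_pos (fun i _ => hw i) Finset.univ_nonempty)) (hCx i)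

lemma exists_pos_mulVec_eq_smul_of_commute
    (hC : ∀ u, 0 ≤ u → u ≠ 0 → ∀ i, 0 < (C *ᵥ u) i) (hBC : Commute B C) :
    ∃ (w : ι → ℝ) (r : ℝ), (∀ i, 0 < w i) ∧ B *ᵥ w = r • w := by
  obtain ⟨u₀, hu₀, hmax⟩ := (isCompact_stdSimplex ℝ ι).exists_isMaxOn
    ⟨_, inv_sum_smul_mem_stdSimplex (w := 1) fun _ => one_pos⟩
    (continuousOn_collatzWielandt_mulVec hC)
  exact ⟨_, _, hC u₀ hu₀.1 (ne_zero_of_mem_stdSimplex hu₀),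
    mulVec_eq_smul_of_isMaxOn hC hBC hu₀ hmax⟩

end CollatzWielandt

section PerronFrobenius

variable {n : ℕ} {A B : Matrix (Fin n) (Fin n) ℝ}

theorem MatIrreducible.exists_pos_mulVec_eq_smul (hn : 0 < n) (hB : ∀ i j, 0 ≤ B i j)
    (h : MatIrreducible B) : ∃ (w : Fin n → ℝ) (r : ℝ), (∀ i, 0 < w i) ∧ B *ᵥ w = r • w :=
  have : Nonempty (Fin n) := Fin.pos_iff_nonempty.mp hn
  exists_pos_mulVec_eq_smul_of_commute (C := (1 + B) ^ (n - 1))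
    (fun _ hu hu0 => h.pow_sub_one_mulVec_pos hB hu hu0)
    (((Commute.one_right B).add_right (Commute.refl B)).pow_right _)

lemma MatIrreducible.re_lt_of_vecMul_eq_smul (hA : ∀ i j, 0 ≤ A i j)
    (hAB : ∀ i j, A i j ≤ B i j) (hne : A ≠ B) (h : MatIrreducible B) {w : Fin n → ℝ} {r : ℝ}
    (hw : ∀ i, 0 < w i) (hwB : w ᵥ* B = r • w) {μ : ℂ}
    (hμ : μ ∈ spectrum ℂ (A.map Complex.ofReal)) : μ.re < r := by
  obtain ⟨v, hv0, hv⟩ := exists_mulVec_eq_smul_of_mem_spectrum hμ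
  set u : Fin n → ℝ := fun i => ‖v i‖
  have hu : 0 ≤ u := fun i => norm_nonneg _
  have hu0 : u ≠ 0 := fun h0 => hv0 (funext fun i => norm_eq_zero.mp (congrFun h0 i))
  have hμA : ‖μ‖ • u ≤ A *ᵥ u := norm_smul_le_mulVec_norm hA hv
  have hABu : A *ᵥ u ≤ B *ᵥ u := mulVec_le_mulVec_of_le hAB hu
  have hμB : ‖μ‖ • u ≠ B *ᵥ u := fun heq =>
    hne (eq_of_mulVec_eq_of_le hAB
      (h.pos_of_mulVec_eq_smul (fun i j => (hA i j).trans (hAB i j)) hu hu0 heq.symm)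
      (hABu.antisymm (heq ▸ hμA)))
  have hlt := dotProduct_lt_dotProduct_of_pos_left hw (hμA.trans hABu) hμB
  rw [dotProduct_smul, dotProduct_mulVec, hwB, smul_dotProduct, smul_eq_mul, smul_eq_mul] at hlt
  have hwu : 0 < w ⬝ᵥ u := by
    simpa using dotProduct_lt_dotProduct_of_pos_left hw hu hu0.symm
  exact (Complex.re_le_norm μ).trans_lt (lt_of_mul_lt_mul_right hlt hwu.le)

theorem specBound_lt_of_le (hn : 0 < n) (hA : ∀ i j, 0 ≤ A i j) (hAB : ∀ i j, A i j ≤ B i j)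
    (hne : A ≠ B) (h : MatIrreducible B) : specBound A < specBound B := by
  have hBt : ∀ i j, 0 ≤ Bᵀ i j := fun i j => (hA j i).trans (hAB j i)
  obtain ⟨w, r, hw, hBw⟩ := h.transpose.exists_pos_mulVec_eq_smul hn hBt
  rw [mulVec_transpose] at hBw
  have hw0 : w ≠ 0 := fun h0 => (hw ⟨0, hn⟩).ne' (congrFun h0 _)
  obtain ⟨μ, hμ, hre⟩ := exists_re_eq_specBound hn A
  calc specBound A = μ.re := hre.symm
    _ < r := h.re_lt_of_vecMul_eq_smul hA hAB hne hw hBw hμ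
    _ ≤ specBound B := by
      simpa using
        re_le_specBound B (ofReal_mem_spectrum_map (mem_spectrum_of_vecMul_eq_smul hw0 hBw))

end PerronFrobenius

/-- If `P` is essentially nonnegative, `Q` is nonnegative and
nonzero, and `P + Q` is irreducible, then `s(P+Q) > s(P)`. -/
theorem specBound_add_nonneg_lt {n : ℕ} (hn : 0 < n)
    (P Q : Matrix (Fin n) (Fin n) ℝ)
    (hP : ∀ i j, i ≠ j → 0 ≤ P i j)
    (hQ : ∀ i j, 0 ≤ Q i j) (hQne : Q ≠ 0)
    (hirr : MatIrreducible (P + Q)) :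
    specBound P < specBound (P + Q) := by
  obtain ⟨c, hc⟩ := exists_nonneg_add_smul_one hP
  have hle : ∀ i j, (P + c • 1) i j ≤ (P + Q + c • 1) i j := fun i j => by
    simpa [add_right_comm] using hQ i j
  have hne : P + c • 1 ≠ P + Q + c • 1 := by
    rwa [add_right_comm, Ne, left_eq_add]
  have key := specBound_lt_of_le hn hc hle hne (hirr.add_smul_one c)
  rwa [specBound_add_smul_one hn, specBound_add_smul_one hn, add_lt_add_iff_right] at key
end

section
/- Let d, q > 0 and r₂, r₃ ≥ 0. Let B be the 2×2 matrix with rows [−d−q+r₂, 2d] and [d+q, −2d+r₃]. Then the spectral bound satisfies s(B) > max{−d−q+r₂, −2d+r₃}. -/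
/-!
A real 2×2 matrix `!![a, b; c, e]` with `b * c ≥ 0` has a nonnegative discriminant
`(a - e)² + 4bc`, so both eigenvalues are real and the spectral bound is the larger root
`(a + e + √((a - e)² + 4bc)) / 2` of the characteristic polynomial. When `b * c > 0` the square
root strictly exceeds `|a - e|`, which puts this root strictly above both diagonal entries.
-/

open Matrix

section FinTwo

variable (a b c e : ℝ)

theorem mem_spectrum_map_fin_two_iff (μ : ℂ) :
    μ ∈ spectrum ℂ ((!![a, b; c, e]).map Complex.ofReal) ↔
      (μ - a) * (μ - e) - b * c = 0 := by
  rw [spectrum.mem_iff, Matrix.isUnit_iff_isUnit_det, isUnit_iff_ne_zero, not_ne_iff,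
    Matrix.det_fin_two]
  simp [Matrix.algebraMap_matrix_apply]

noncomputable def discrFinTwo : ℝ := (a - e) ^ 2 + 4 * (b * c)

variable {a b c e}

theorem mem_spectrum_map_fin_two_iff_of_mul_nonneg (hbc : 0 ≤ b * c) (μ : ℂ) :
    μ ∈ spectrum ℂ ((!![a, b; c, e]).map Complex.ofReal) ↔
      μ = ((a + e + √(discrFinTwo a b c e)) / 2 : ℝ) ∨
        μ = ((a + e - √(discrFinTwo a b c e)) / 2 : ℝ) := by
  have hsq : (√(discrFinTwo a b c e) : ℂ) ^ 2 = ((a : ℂ) - e) ^ 2 + 4 * (b * c) := by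
    exact_mod_cast congrArg Complex.ofReal (Real.sq_sqrt (by unfold discrFinTwo; positivity))
  have hfactor : (μ - a) * (μ - e) - b * c =
      (μ - ((a + e + √(discrFinTwo a b c e)) / 2 : ℝ)) *
        (μ - ((a + e - √(discrFinTwo a b c e)) / 2 : ℝ)) := by
    push_cast
    linear_combination (1 / 4 : ℂ) * hsq
  rw [mem_spectrum_map_fin_two_iff, hfactor, mul_eq_zero, sub_eq_zero, sub_eq_zero]

theorem specBound_fin_two_of_mul_nonneg (hbc : 0 ≤ b * c) :
    specBound !![a, b; c, e] = (a + e + √(discrFinTwo a b c e)) / 2 := by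
  refine IsGreatest.csSup_eq ⟨⟨_, (mem_spectrum_map_fin_two_iff_of_mul_nonneg hbc _).2
    (Or.inl rfl), Complex.ofReal_re _⟩, ?_⟩
  rintro t ⟨μ, hμ, rfl⟩
  rcases (mem_spectrum_map_fin_two_iff_of_mul_nonneg hbc μ).1 hμ with rfl | rfl
  · simp
  · simp only [Complex.ofReal_re]
    linarith [Real.sqrt_nonneg (discrFinTwo a b c e)]

theorem max_lt_specBound_fin_two (hbc : 0 < b * c) :
    max a e < specBound !![a, b; c, e] := by
  have habs : |a - e| < √(discrFinTwo a b c e) := by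
    rw [← Real.sqrt_sq_eq_abs]
    exact Real.sqrt_lt_sqrt (sq_nonneg _) (by unfold discrFinTwo; linarith)
  rw [specBound_fin_two_of_mul_nonneg hbc.le, max_lt_iff]
  constructor <;> linarith [abs_lt.1 habs]

end FinTwo

theorem specBound_B_tributary_gt_general (d q r₂ r₃ : ℝ) (hd : 0 < d) (hq : 0 < q) :
    max (-d - q + r₂) (-2 * d + r₃) <
      specBound !![-d - q + r₂, 2 * d; d + q, -2 * d + r₃] :=
  max_lt_specBound_fin_two (by positivity)

/-- For the limiting matrix `B` of the tributary network,
`s(B) > max{−d−q+r₂, −2d+r₃}`. -/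
theorem specBound_B_tributary_gt (d q r₂ r₃ : ℝ) (hd : 0 < d) (hq : 0 < q)
    (hr₂ : 0 ≤ r₂) (hr₃ : 0 ≤ r₃) :
    max (-d - q + r₂) (-2 * d + r₃) <
      specBound !![-d - q + r₂, 2 * d; d + q, -2 * d + r₃] :=
  specBound_B_tributary_gt_general d q r₂ r₃ hd hq
end

section
/- Let d, q > 0 and r₁, r₂, r₃ ≥ 0 with r₁ > r₂. Let A be the 3×3 matrix with rows [−d−q+r₁, 0, d], [0, −d−q+r₂, d], [d+q, d+q, −2d+r₃], and B the 2×2 matrix with rows [−d−q+r₂, 2d], [d+q, −2d+r₃]. Then s(A) > s(B). -/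
/-!
Expanding along the first row gives `p_A(x) = (x - a₁₁) p_B(x) + d (d + q) (r₂ - r₁)` for the
characteristic polynomials. Since the off-diagonal entries of `B` have a nonnegative product, its
eigenvalues are real, so `s(B)` is a root of `p_B` and `p_A(s(B)) < 0`. As `p_A` is monic, it has a
real root beyond `s(B)`, which is an eigenvalue of `A`.
-/

open Matrix

open Polynomial

lemma Complex.im_eq_zero_of_sub_mul_sub_eq {a b c : ℝ} (hc : 0 ≤ c) {z : ℂ}
    (h : (z - a) * (z - b) = c) : z.im = 0 := by
  have hre := congrArg Complex.re h
  have him := congrArg Complex.im h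
  simp only [Complex.mul_re, Complex.mul_im, Complex.sub_re, Complex.sub_im, Complex.ofReal_re,
    Complex.ofReal_im, sub_zero] at hre him
  -- `him` forces `z.im = 0` or `z.re = (a + b) / 2`; in the second case `hre` reads
  -- `c = -(a - b) ^ 2 / 4 - z.im ^ 2`.
  have : z.im * (2 * z.re - a - b) = 0 := by linarith
  rcases mul_eq_zero.mp this with h0 | hmid
  · exact h0
  · nlinarith [sq_nonneg z.im, sq_nonneg (a - b)]

section specBound

variable {n : ℕ} (M : Matrix (Fin n) (Fin n) ℝ)

lemma finite_re_image_spectrum : (Complex.re '' spectrum ℂ (M.map Complex.ofReal)).Finite :=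
  (finite_spectrum _).image _

lemma re_le_specBound_s7 {z : ℂ} (hz : z ∈ spectrum ℂ (M.map Complex.ofReal)) :
    z.re ≤ specBound M :=
  le_csSup (finite_re_image_spectrum M).bddAbove ⟨z, hz, rfl⟩

lemma exists_mem_spectrum_re_eq_specBound [NeZero n] :
    ∃ z ∈ spectrum ℂ (M.map Complex.ofReal), z.re = specBound M :=
  ((spectrum.nonempty_of_isAlgClosed_of_finiteDimensional ℂ _).image _).csSup_mem
    (finite_re_image_spectrum M)

lemma ofReal_mem_spectrum_map_iff {x : ℝ} :
    (x : ℂ) ∈ spectrum ℂ (M.map Complex.ofReal) ↔ M.charpoly.IsRoot x := by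
  rw [mem_spectrum_iff_isRoot_charpoly, show M.map Complex.ofReal = M.map Complex.ofRealHom
    from rfl, charpoly_map, IsRoot, ← Complex.ofRealHom_eq_coe, eval_map_apply,
    Complex.ofRealHom_eq_coe, Complex.ofReal_eq_zero, IsRoot]

lemma lt_specBound_of_eval_charpoly_neg {x : ℝ} (hx : M.charpoly.eval x < 0) :
    x < specBound M := by
  have hdeg : 0 < M.charpoly.degree := by
    rcases Nat.eq_zero_or_pos n with rfl | hn
    · norm_num at hx
    · simpa [charpoly_degree_eq_dim] using hn
  have hpos : ∀ᶠ y in Filter.atTop, 0 < M.charpoly.eval y :=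
    (M.charpoly.tendsto_atTop_of_leadingCoeff_nonneg hdeg
      (M.charpoly_monic.leadingCoeff ▸ zero_le_one)).eventually_gt_atTop 0
  obtain ⟨y, hy, hxy⟩ := (hpos.and (Filter.eventually_ge_atTop x)).exists
  obtain ⟨r, ⟨hxr, -⟩, hroot⟩ := intermediate_value_Icc hxy M.charpoly.continuousOn
    ⟨hx.le, hy.le⟩
  have hxr : x < r := lt_of_le_of_ne hxr (by rintro rfl; exact hx.ne hroot)
  calc x < r := hxr
    _ = (r : ℂ).re := (Complex.ofReal_re _).symm
    _ ≤ specBound M := re_le_specBound_s7 M ((ofReal_mem_spectrum_map_iff M).2 hroot)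

end specBound

lemma isRoot_charpoly_specBound_of_fin_two (M : Matrix (Fin 2) (Fin 2) ℝ)
    (h : 0 ≤ M 0 1 * M 1 0) : M.charpoly.IsRoot (specBound M) := by
  obtain ⟨z, hz, hre⟩ := exists_mem_spectrum_re_eq_specBound M
  have hquad : (z - M 0 0) * (z - M 1 1) = ↑(M 0 1 * M 1 0) := by
    have := mem_spectrum_iff_isRoot_charpoly.1 hz
    rw [charpoly_fin_two, IsRoot] at this
    simp only [trace_fin_two, det_fin_two, map_apply, eval_add, eval_sub,
      eval_pow, eval_X, eval_mul, eval_C] at this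
    push_cast
    linear_combination this
  have hz_real : z = (specBound M : ℂ) :=
    Complex.ext (by simpa using hre) (by simpa using Complex.im_eq_zero_of_sub_mul_sub_eq h hquad)
  exact (ofReal_mem_spectrum_map_iff M).1 (hz_real ▸ hz)

lemma eval_charpoly_tributary (d q r₁ r₂ r₃ x : ℝ) :
    (!![-d - q + r₁, 0, d; 0, -d - q + r₂, d; d + q, d + q, -2 * d + r₃]).charpoly.eval x =
      (x - (-d - q + r₁)) * (!![-d - q + r₂, 2 * d; d + q, -2 * d + r₃]).charpoly.eval x
        + d * (d + q) * (r₂ - r₁) := by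
  simp only [eval_charpoly, det_fin_three, det_fin_two, scalar_apply,
    Matrix.sub_apply, diagonal_apply_eq, diagonal_apply_ne, of_apply,
    cons_val', cons_val_zero, cons_val_one, cons_val,
    cons_val_fin_one, ne_eq, Fin.reduceEq, not_false_eq_true]
  ring

theorem specBound_tributary_gt_general (d q r₁ r₂ r₃ : ℝ) (hd : 0 < d) (hq : 0 < q)
    (hlt : r₂ < r₁) :
    specBound !![-d - q + r₂, 2 * d; d + q, -2 * d + r₃] <
      specBound !![-d - q + r₁, 0, d;
                   0, -d - q + r₂, d;
                   d + q, d + q, -2 * d + r₃] := by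
  have hp : 0 < d * (d + q) := by positivity
  have hroot := isRoot_charpoly_specBound_of_fin_two !![-d - q + r₂, 2 * d; d + q, -2 * d + r₃]
    (show 0 ≤ 2 * d * (d + q) by positivity)
  apply lt_specBound_of_eval_charpoly_neg
  rw [eval_charpoly_tributary, hroot.eq_zero, mul_zero, zero_add]
  exact mul_neg_of_pos_of_neg hp (sub_neg.2 hlt)

/-- Comparison of spectral bounds of the tributary matrix A
and its limiting matrix B. -/
theorem specBound_tributary_gt (d q r₁ r₂ r₃ : ℝ) (hd : 0 < d) (hq : 0 < q)
    (hr₁ : 0 ≤ r₁) (hr₂ : 0 ≤ r₂) (hr₃ : 0 ≤ r₃) (hlt : r₂ < r₁) :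
    specBound !![-d - q + r₂, 2 * d; d + q, -2 * d + r₃] <
      specBound !![-d - q + r₁, 0, d;
                   0, -d - q + r₂, d;
                   d + q, d + q, -2 * d + r₃] :=
  specBound_tributary_gt_general d q r₁ r₂ r₃ hd hq hlt
end

section
/- Let d, q > 0 and r₁, r₂, r₃ ≥ 0 with r₁ = r₂. Let A be the 3×3 matrix with rows [−d−q+r₁, 0, d], [0, −d−q+r₂, d], [d+q, d+q, −2d+r₃], and B the 2×2 matrix with rows [−d−q+r₂, 2d], [d+q, −2d+r₃]. Then s(A) = s(B). -/
/-!
With `a = -d - q + r₁ = -d - q + r₂` and `e = -2d + r₃`, the vector `(1, -1, 0)` is an eigenvector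
of `A` for `a`, and `det (μ - A) = (μ - a) · det (μ - B)`. The off-diagonal entries of `B` have
nonnegative product, so its eigenvalues are real, and the larger one,
`(a + e + √((a - e)² + 8 d (d + q))) / 2`, is at least `a`: it is the spectral bound of both.
-/

open Matrix

theorem Matrix.mem_spectrum_iff_det_scalar_sub_eq_zero {n K : Type*} [Fintype n] [DecidableEq n]
    [Field K] (M : Matrix n n K) (μ : K) :
    μ ∈ spectrum K M ↔ (scalar n μ - M).det = 0 := by
  rw [mem_spectrum_iff_isRoot_charpoly, Polynomial.IsRoot, eval_charpoly]

theorem Matrix.spectrum_fin_two {K : Type*} [Field K] [NeZero (2 : K)] (a b c e s : K)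
    (hs : (a - e) ^ 2 + 4 * b * c = s * s) :
    spectrum K !![a, b; c, e] = {(a + e + s) / 2, (a + e - s) / 2} := by
  ext μ
  have hdiscrim : discrim 1 (-(a + e)) (a * e - b * c) = s * s := by
    rw [discrim, ← hs]
    ring
  have hdet : (scalar (Fin 2) μ - !![a, b; c, e]).det =
      1 * (μ * μ) + -(a + e) * μ + (a * e - b * c) := by
    simp only [det_fin_two, scalar_apply, Matrix.sub_apply, diagonal_apply, of_apply, cons_val',
      cons_val_zero, cons_val_one, cons_val_fin_one, Fin.isValue, Fin.reduceEq, if_true, if_false]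
    ring
  rw [mem_spectrum_iff_det_scalar_sub_eq_zero, hdet, quadratic_eq_zero_iff one_ne_zero hdiscrim]
  simp

theorem Matrix.det_scalar_sub_tributary {R : Type*} [CommRing R] (a b c e μ : R) :
    (scalar (Fin 3) μ - !![a, 0, b; 0, a, b; c, c, e]).det =
      (μ - a) * (scalar (Fin 2) μ - !![a, 2 * b; c, e]).det := by
  simp only [det_fin_three, det_fin_two, scalar_apply, Matrix.sub_apply, diagonal_apply, of_apply,
    cons_val', cons_val_zero, cons_val_one, cons_val, cons_val_fin_one, Fin.isValue, Fin.reduceEq,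
    if_true, if_false]
  ring

theorem Matrix.spectrum_tributary {K : Type*} [Field K] (a b c e : K) :
    spectrum K !![a, 0, b; 0, a, b; c, c, e] = insert a (spectrum K !![a, 2 * b; c, e]) := by
  ext μ
  simp only [Set.mem_insert_iff, mem_spectrum_iff_det_scalar_sub_eq_zero,
    det_scalar_sub_tributary, mul_eq_zero, sub_eq_zero]

theorem spectrum_map_ofReal_fin_two {a b c e : ℝ} (hbc : 0 ≤ b * c) :
    spectrum ℂ (!![a, b; c, e].map Complex.ofReal) =
      Complex.ofReal '' {(a + e + √((a - e) ^ 2 + 4 * b * c)) / 2,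
        (a + e - √((a - e) ^ 2 + 4 * b * c)) / 2} := by
  set s := √((a - e) ^ 2 + 4 * b * c)
  have hs : (a - e) ^ 2 + 4 * b * c = s * s := (Real.mul_self_sqrt (by nlinarith)).symm
  rw [eta_fin_two (Matrix.map _ _), Set.image_pair]
  simp only [map_apply, of_apply, cons_val', cons_val_zero, cons_val_one, empty_val',
    cons_val_fin_one]
  push_cast
  exact spectrum_fin_two _ _ _ _ _ (by exact_mod_cast hs)

theorem specBound_eq_sSup_of_spectrum_eq_image {n : ℕ} {M : Matrix (Fin n) (Fin n) ℝ} {S : Set ℝ}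
    (hS : spectrum ℂ (M.map Complex.ofReal) = Complex.ofReal '' S) : specBound M = sSup S := by
  simp [specBound, hS]

theorem specBound_tributary {a b c e : ℝ} (hbc : 0 ≤ b * c) :
    specBound !![a, 0, b; 0, a, b; c, c, e] = specBound !![a, 2 * b; c, e] := by
  set s := √((a - e) ^ 2 + 4 * (2 * b) * c)
  have hB := spectrum_map_ofReal_fin_two (a := a) (b := 2 * b) (e := e)
    (by rw [mul_assoc]; positivity)
  have hA : spectrum ℂ (!![a, 0, b; 0, a, b; c, c, e].map Complex.ofReal) =
      Complex.ofReal '' insert a {(a + e + s) / 2, (a + e - s) / 2} := by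
    rw [Set.image_insert_eq, ← hB, eta_fin_three (Matrix.map _ _), eta_fin_two (Matrix.map _ _)]
    simpa using spectrum_tributary (a : ℂ) b c e
  have ha_le : a ≤ (a + e + s) / 2 := by
    have : |a - e| ≤ s := Real.abs_le_sqrt (by nlinarith)
    linarith [le_abs_self (a - e)]
  rw [specBound_eq_sSup_of_spectrum_eq_image hA, specBound_eq_sSup_of_spectrum_eq_image hB,
    csSup_insert (Set.toFinite _).bddAbove (Set.insert_nonempty _ _), csSup_pair]
  exact max_eq_right (le_sup_of_le_left ha_le)

theorem specBound_tributary_eq_general (d q r₁ r₂ r₃ : ℝ) (hd : 0 < d) (hq : 0 < q) (heq : r₁ = r₂) :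
    specBound !![-d - q + r₁, 0, d;
                   0, -d - q + r₂, d;
                   d + q, d + q, -2 * d + r₃] =
      specBound !![-d - q + r₂, 2 * d; d + q, -2 * d + r₃] := by
  subst heq
  exact specBound_tributary (by positivity)

/-- Comparison of spectral bounds of the tributary matrix A
and its limiting matrix B. -/
theorem specBound_tributary_eq (d q r₁ r₂ r₃ : ℝ) (hd : 0 < d) (hq : 0 < q)
    (hr₁ : 0 ≤ r₁) (hr₂ : 0 ≤ r₂) (hr₃ : 0 ≤ r₃) (heq : r₁ = r₂) :
    specBound !![-d - q + r₁, 0, d;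
                   0, -d - q + r₂, d;
                   d + q, d + q, -2 * d + r₃] =
      specBound !![-d - q + r₂, 2 * d; d + q, -2 * d + r₃] :=
  specBound_tributary_eq_general d q r₁ r₂ r₃ hd hq heq
end

section
/- Let d, q > 0, K > 0, k ≥ 0, and r₁, r₂ ≥ 0. If r₃ = 0, then the triple (u₁,u₂,u₃) = (K, K, K(d+q)/d) satisfies the equilibrium system: r₁u₁(1−u₁/K) − (d+q+k)u₁ + ku₂ + du₃ = 0, r₂u₂(1−u₂/K) + ku₁ − (d+q+k)u₂ + du₃ = 0, and r₃u₃(1−u₃/K) + (d+q)u₁ + (d+q)u₂ − 2du₃ = 0. Consequently, since the positive equilibrium is unique, the network biomass u₁+u₂+u₃ = K(2 + (d+q)/d) is independent of k. -/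
def IsTributaryEquilibrium (d q K k r₁ r₂ r₃ v₁ v₂ v₃ : ℝ) : Prop :=
  r₁ * v₁ * (1 - v₁ / K) - (d + q + k) * v₁ + k * v₂ + d * v₃ = 0 ∧
  r₂ * v₂ * (1 - v₂ / K) + k * v₁ - (d + q + k) * v₂ + d * v₃ = 0 ∧
  r₃ * v₃ * (1 - v₃ / K) + (d + q) * v₁ + (d + q) * v₂ - 2 * d * v₃ = 0

/-- At `v₁ = v₂ = K` the upstream logistic terms vanish (also for `K = 0`, where `K / K = 0`) and
`r₃ = 0` removes the downstream one; the remaining linear balance fixes `v₃ = K(d+q)/d`. -/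
theorem isTributaryEquilibrium_zero_downstreamGrowth {d : ℝ} (hd : d ≠ 0) (q K k r₁ r₂ : ℝ) :
    IsTributaryEquilibrium d q K k r₁ r₂ 0 K K (K * (d + q) / d) := by
  refine ⟨?_, ?_, ?_⟩ <;> rcases eq_or_ne K 0 with rfl | hK <;> field_simp <;> ring

theorem tributary_biomass_r3_zero_general (d q K k r₁ r₂ r₃ : ℝ)
    (hd : 0 < d) (hq : 0 < q) (hK : 0 < K)
    (hr₃ : r₃ = 0)
    (u₁ u₂ u₃ : ℝ)
    (huniq : ∀ v₁ v₂ v₃ : ℝ, 0 < v₁ → 0 < v₂ → 0 < v₃ →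
      r₁ * v₁ * (1 - v₁ / K) - (d + q + k) * v₁ + k * v₂ + d * v₃ = 0 →
      r₂ * v₂ * (1 - v₂ / K) + k * v₁ - (d + q + k) * v₂ + d * v₃ = 0 →
      r₃ * v₃ * (1 - v₃ / K) + (d + q) * v₁ + (d + q) * v₂ - 2 * d * v₃ = 0 →
      v₁ = u₁ ∧ v₂ = u₂ ∧ v₃ = u₃) :
    (r₁ * K * (1 - K / K) - (d + q + k) * K + k * K + d * (K * (d + q) / d) = 0 ∧
     r₂ * K * (1 - K / K) + k * K - (d + q + k) * K + d * (K * (d + q) / d) = 0 ∧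
     r₃ * (K * (d + q) / d) * (1 - (K * (d + q) / d) / K) + (d + q) * K + (d + q) * K -
       2 * d * (K * (d + q) / d) = 0) ∧
    u₁ + u₂ + u₃ = K * (2 + (d + q) / d) := by
  subst hr₃
  have hsol := isTributaryEquilibrium_zero_downstreamGrowth hd.ne' q K k r₁ r₂
  obtain ⟨rfl, rfl, rfl⟩ := huniq K K _ hK hK (by positivity) hsol.1 hsol.2.1 hsol.2.2
  exact ⟨hsol, by ring⟩

/-- If `r₃ = 0`, then `(K, K, K(d+q)/d)` solves the tributary
equilibrium system, and hence (by uniqueness of the positive equilibrium) the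
network biomass equals `K(2 + (d+q)/d)`, independent of `k`. -/
theorem tributary_biomass_r3_zero (d q K k r₁ r₂ r₃ : ℝ)
    (hd : 0 < d) (hq : 0 < q) (hK : 0 < K) (hk : 0 ≤ k)
    (hr₁ : 0 ≤ r₁) (hr₂ : 0 ≤ r₂) (hr₃ : r₃ = 0)
    (u₁ u₂ u₃ : ℝ) (hu₁ : 0 < u₁) (hu₂ : 0 < u₂) (hu₃ : 0 < u₃)
    (heq₁ : r₁ * u₁ * (1 - u₁ / K) - (d + q + k) * u₁ + k * u₂ + d * u₃ = 0)
    (heq₂ : r₂ * u₂ * (1 - u₂ / K) + k * u₁ - (d + q + k) * u₂ + d * u₃ = 0)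
    (heq₃ : r₃ * u₃ * (1 - u₃ / K) + (d + q) * u₁ + (d + q) * u₂ - 2 * d * u₃ = 0)
    (huniq : ∀ v₁ v₂ v₃ : ℝ, 0 < v₁ → 0 < v₂ → 0 < v₃ →
      r₁ * v₁ * (1 - v₁ / K) - (d + q + k) * v₁ + k * v₂ + d * v₃ = 0 →
      r₂ * v₂ * (1 - v₂ / K) + k * v₁ - (d + q + k) * v₂ + d * v₃ = 0 →
      r₃ * v₃ * (1 - v₃ / K) + (d + q) * v₁ + (d + q) * v₂ - 2 * d * v₃ = 0 →
      v₁ = u₁ ∧ v₂ = u₂ ∧ v₃ = u₃) :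
    (r₁ * K * (1 - K / K) - (d + q + k) * K + k * K + d * (K * (d + q) / d) = 0 ∧
     r₂ * K * (1 - K / K) + k * K - (d + q + k) * K + d * (K * (d + q) / d) = 0 ∧
     r₃ * (K * (d + q) / d) * (1 - (K * (d + q) / d) / K) + (d + q) * K + (d + q) * K -
       2 * d * (K * (d + q) / d) = 0) ∧
    u₁ + u₂ + u₃ = K * (2 + (d + q) / d) :=
  tributary_biomass_r3_zero_general d q K k r₁ r₂ r₃ hd hq hK hr₃ u₁ u₂ u₃ huniq
end

section
/- Let (G, f) be a leveled graph on n nodes with level function f, and let L be the connection matrix of a homogeneous flow stream network: whenever nodes i, j are connected with f(j) − f(i) = 1 then ℓ_{ji} = d+q and ℓ_{ij} = d (with d, q > 0). Define v ∈ ℝⁿ by v_i = (d/(d+q))^{f(i)}. Let E be a connection matrix satisfying: e_{ij} = e_{ji} ∈ {0,1} whenever f(i) = f(j), and e_{ij} = e_{ji} = 0 whenever f(i) ≠ f(j) (i ≠ j), with columns of E summing to zero. Then for all i ≠ j and all k ≥ 0, v_i(ℓ_{ij} + k e_{ij}) = v_j(ℓ_{ji} + k e_{ji}); i.e., diag(v)·(L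 + kE) is symmetric. -/
open Matrix

/-! With `r = d / (d + q)`, an edge of `L` between levels `m` and `m + 1` has weight `d` one
way and `d + q` the other, and `r ^ m * d = r ^ (m + 1) * (d + q)`; so `v_i = r ^ f i`
balances `L` edge by edge.
Edges of `E` join nodes of equal level, where `v` is constant and `E` is symmetric, so `v`
balances `E` too; balancing is preserved by sums and scalar multiples. -/

namespace Matrix

variable {ι R : Type*}

def SymmetrizedBy [Mul R] (v : ι → R) (A : Matrix ι ι R) : Prop :=
  ∀ i j, v i * A i j = v j * A j i

theorem symmetrizedBy_iff_isSymm_diagonal_mul [Semiring R] [Fintype ι] [DecidableEq ι]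
    {v : ι → R} {A : Matrix ι ι R} : SymmetrizedBy v A ↔ (diagonal v * A).IsSymm := by
  simp only [IsSymm.ext_iff, diagonal_mul]
  exact ⟨fun h i j => (h i j).symm, fun h i j => (h i j).symm⟩

theorem SymmetrizedBy.add [Semiring R] {v : ι → R} {A B : Matrix ι ι R}
    (hA : SymmetrizedBy v A) (hB : SymmetrizedBy v B) : SymmetrizedBy v (A + B) := by
  intro i j
  simp only [add_apply, mul_add, hA i j, hB i j]

theorem SymmetrizedBy.smul [CommSemiring R] {v : ι → R} {A : Matrix ι ι R}
    (hA : SymmetrizedBy v A) (k : R) : SymmetrizedBy v (k • A) := by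
  intro i j
  simp only [smul_apply, smul_eq_mul, mul_left_comm (v _) k, hA i j]

theorem symmetrizedBy_comp_of_levelwise_symm [MulZeroClass R] {f : ι → ℕ}
    (g : ℕ → R) {A : Matrix ι ι R}
    (hsame : ∀ i j, i ≠ j → f i = f j → A i j = A j i)
    (hdiff : ∀ i j, i ≠ j → f i ≠ f j → A i j = 0 ∧ A j i = 0) :
    SymmetrizedBy (fun i => g (f i)) A := by
  intro i j
  beta_reduce
  by_cases hij : i = j
  · rw [hij]
  by_cases hf : f i = f j
  · rw [hf, hsame i j hij hf]
  · obtain ⟨hA₁, hA₂⟩ := hdiff i j hij hf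
    rw [hA₁, hA₂, mul_zero, mul_zero]

theorem div_add_pow_mul_eq_pow_succ_mul {K : Type*} [Field K] {d q : K} (hdq : d + q ≠ 0)
    (m : ℕ) : (d / (d + q)) ^ m * d = (d / (d + q)) ^ (m + 1) * (d + q) := by
  rw [pow_succ, mul_assoc, div_mul_cancel₀ d hdq]

theorem symmetrizedBy_homogeneous_flow {K : Type*} [Field K] {d q : K} (hdq : d + q ≠ 0)
    {f : ι → ℕ} {L : Matrix ι ι K}
    (hL : ∀ i j, i ≠ j →
      (L i j = 0 ∧ L j i = 0) ∨
      (f j = f i + 1 ∧ L j i = d + q ∧ L i j = d) ∨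
      (f i = f j + 1 ∧ L i j = d + q ∧ L j i = d)) :
    SymmetrizedBy (fun i => (d / (d + q)) ^ f i) L := by
  intro i j
  beta_reduce
  by_cases hij : i = j
  · rw [hij]
  rcases hL i j hij with ⟨hij', hji⟩ | ⟨hf, hji, hij'⟩ | ⟨hf, hij', hji⟩
  · rw [hij', hji, mul_zero, mul_zero]
  · rw [hij', hji, hf, div_add_pow_mul_eq_pow_succ_mul hdq]
  · rw [hij', hji, hf, div_add_pow_mul_eq_pow_succ_mul hdq]

end Matrix

theorem diag_v_symmetrizes_homogeneous_flow_general {n : ℕ}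
    (d q : ℝ) (hd : 0 < d) (hq : 0 < q)
    (f : Fin n → ℕ)
    (L : Matrix (Fin n) (Fin n) ℝ)
    (hL : ∀ i j : Fin n, i ≠ j →
      (L i j = 0 ∧ L j i = 0) ∨
      (f j = f i + 1 ∧ L j i = d + q ∧ L i j = d) ∨
      (f i = f j + 1 ∧ L i j = d + q ∧ L j i = d))
    (E : Matrix (Fin n) (Fin n) ℝ)
    (hEsame : ∀ i j : Fin n, i ≠ j → f i = f j →
      E i j = E j i ∧ (E i j = 0 ∨ E i j = 1))
    (hEdiff : ∀ i j : Fin n, i ≠ j → f i ≠ f j → E i j = 0 ∧ E j i = 0) :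
    ∀ k : ℝ, 0 ≤ k →
      ((∀ i j : Fin n, (d / (d + q)) ^ f i * (L i j + k * E i j) =
          (d / (d + q)) ^ f j * (L j i + k * E j i)) ∧
       (Matrix.diagonal (fun i => (d / (d + q)) ^ f i : Fin n → ℝ) *
          (L + k • E)).IsSymm) := by
  intro k _
  have hL' := symmetrizedBy_homogeneous_flow (by positivity) hL
  have hE : SymmetrizedBy (fun i => (d / (d + q)) ^ f i) E :=
    symmetrizedBy_comp_of_levelwise_symm _ (fun i j hij hf => (hEsame i j hij hf).1) hEdiff
  have hsum := hL'.add (hE.smul k)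
  exact ⟨hsum, symmetrizedBy_iff_isSymm_diagonal_mul.1 hsum⟩

/-- For a homogeneous flow stream network `(G, f, L)` with an
edge-modification matrix `E` adding bi-directional edges only within levels, the
vector `v_i = (d/(d+q))^{f(i)}` symmetrizes `L + kE`:
`diag(v)·(L + kE)` is symmetric for every `k ≥ 0`. -/
theorem diag_v_symmetrizes_homogeneous_flow {n : ℕ} (hn : 0 < n)
    (d q : ℝ) (hd : 0 < d) (hq : 0 < q)
    (f : Fin n → ℕ)
    (hattain : ∀ (i : Fin n) (m : ℕ), m ≤ f i → ∃ j, f j = m)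
    (L : Matrix (Fin n) (Fin n) ℝ)
    (hLcol : ∀ j, ∑ i, L i j = 0)
    (hL : ∀ i j : Fin n, i ≠ j →
      (L i j = 0 ∧ L j i = 0) ∨
      (f j = f i + 1 ∧ L j i = d + q ∧ L i j = d) ∨
      (f i = f j + 1 ∧ L i j = d + q ∧ L j i = d))
    (E : Matrix (Fin n) (Fin n) ℝ)
    (hEcol : ∀ j, ∑ i, E i j = 0)
    (hEsame : ∀ i j : Fin n, i ≠ j → f i = f j →
      E i j = E j i ∧ (E i j = 0 ∨ E i j = 1))
    (hEdiff : ∀ i j : Fin n, i ≠ j → f i ≠ f j → E i j = 0 ∧ E j i = 0) :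
    ∀ k : ℝ, 0 ≤ k →
      ((∀ i j : Fin n, (d / (d + q)) ^ f i * (L i j + k * E i j) =
          (d / (d + q)) ^ f j * (L j i + k * E j i)) ∧
       (Matrix.diagonal (fun i => (d / (d + q)) ^ f i : Fin n → ℝ) *
          (L + k • E)).IsSymm) :=
  diag_v_symmetrizes_homogeneous_flow_general d q hd hq f L hL E hEsame hEdiff
end

section
/- Let (G, f, L) be a homogeneous flow stream network on n nodes with irreducible connection matrix L, and let E be a connection matrix adding bi-directional edges only between pairs of nodes on the same level (assumption (A4)). Let R = diag(r₁,…,rₙ) and let ρ(k) = s(L + kE + R) be the spectral bound with positive eigenvector x(k). Then ρ'(k) = −(Σ_{(i,j)∈S} (d/(d+q))^{f(i)} (x_i − x_j)²) / (Σ_i (d/(d+q))^{f(i)} x_i²) ≤ 0 for all k ≥ 0, where S is the set of pairs {i,j} with e_{ij} = e_{ji} = 1. -/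
open Matrix

/-!
With the level weights `v i = (d / (d + q)) ^ f i`, the matrix `diag(v) (L + kE + R)` is
symmetric: the weight of level `f i + 1` is the weight of level `f i` times `d / (d + q)`, which
turns the downstream entry `d + q` into the upstream entry `d`, while `E` and `R` only couple
nodes of the same level. Differentiating `(L + kE + R) x = ρ x` in `k` and pairing with
`diag(v) x` therefore cancels the terms in `x'`, leaving `ρ' ⟨x, x⟩_v = ⟨x, E x⟩_v`. As
`diag(v) E` is symmetric with zero row sums, `⟨x, E x⟩_v` is minus half the weighted sum of
`E i j (x i - x j) ^ 2`, a Laplacian quadratic form, which is nonnegative since the off-diagonal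
entries of `E` are `0` or `1`.
-/

namespace Matrix

variable {ι : Type*} [Fintype ι]

theorem IsSymm.dotProduct_mulVec_comm_s19 {α : Type*} [CommSemiring α] {S : Matrix ι ι α}
    (hS : S.IsSymm) (x y : ι → α) : x ⬝ᵥ S *ᵥ y = y ⬝ᵥ S *ᵥ x := by
  rw [dotProduct_mulVec, ← mulVec_transpose, hS.eq, dotProduct_comm]

theorem hasDerivAt_add_smul_mulVec (A B : Matrix ι ι ℝ) {x : ℝ → ι → ℝ} {x' : ι → ℝ} {k : ℝ}
    (hx : HasDerivAt x x' k) :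
    HasDerivAt (fun t => (A + t • B) *ᵥ x t) (B *ᵥ x k + (A + k • B) *ᵥ x') k := by
  have hlin : ∀ M : Matrix ι ι ℝ, HasDerivAt (fun t => M *ᵥ x t) (M *ᵥ x') k := fun M =>
    (LinearMap.toContinuousLinearMap (mulVecLin M)).hasFDerivAt.comp_hasDerivAt k hx
  simp only [add_mulVec, smul_mulVec]
  refine ((hlin A).add ((hasDerivAt_id' k).fun_smul (hlin B))).congr_deriv ?_
  rw [one_smul]
  abel

/-- Differentiating `(A + tB) x(t) = ρ(t) x(t)` and pairing with `W x` cancels the `x'` terms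
because `W (A + kB)` is symmetric. -/
theorem eigenvalue_deriv_mul_dotProduct {A B W : Matrix ι ι ℝ} {ρ : ℝ → ℝ} {x : ℝ → ι → ℝ}
    {ρ' : ℝ} {x' : ι → ℝ} {k : ℝ} (hW : W.IsSymm) (hWM : (W * (A + k • B)).IsSymm)
    (heig : ∀ t, (A + t • B) *ᵥ x t = ρ t • x t)
    (hρ : HasDerivAt ρ ρ' k) (hx : HasDerivAt x x' k) :
    ρ' * (x k ⬝ᵥ W *ᵥ x k) = x k ⬝ᵥ (W * B) *ᵥ x k := by
  have hderiv : B *ᵥ x k + (A + k • B) *ᵥ x' = ρ k • x' + ρ' • x k :=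
    (hasDerivAt_add_smul_mulVec A B hx).unique (by simpa only [heig] using hρ.fun_smul hx)
  have hcross : x k ⬝ᵥ W *ᵥ ((A + k • B) *ᵥ x') = ρ k * (x k ⬝ᵥ W *ᵥ x') := by
    rw [mulVec_mulVec, hWM.dotProduct_mulVec_comm_s19, ← mulVec_mulVec, heig, mulVec_smul,
      dotProduct_smul, hW.dotProduct_mulVec_comm_s19, smul_eq_mul]
  have hpair := congrArg (fun y => x k ⬝ᵥ W *ᵥ y) hderiv
  simp only [mulVec_add, dotProduct_add, hcross, mulVec_smul, dotProduct_smul,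
    smul_eq_mul] at hpair
  rw [← mulVec_mulVec]
  linarith

theorem sum_mul_sub_sq_eq_neg_two_mul_dotProduct {S : Matrix ι ι ℝ} (hS : S.IsSymm)
    (hrow : ∀ i, ∑ j, S i j = 0) (x : ι → ℝ) :
    ∑ i, ∑ j, S i j * (x i - x j) ^ 2 = -2 * (x ⬝ᵥ S *ᵥ x) := by
  have hleft : ∑ i, ∑ j, S i j * x i ^ 2 = 0 := by
    simp [← Finset.sum_mul, hrow]
  have hright : ∑ i, ∑ j, S i j * x j ^ 2 = 0 := by
    rw [Finset.sum_comm]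
    simp [← Finset.sum_mul, hS.apply, hrow]
  have hcross : x ⬝ᵥ S *ᵥ x = ∑ i, ∑ j, x i * S i j * x j := by
    simp [dotProduct, mulVec, Finset.mul_sum, mul_assoc]
  calc ∑ i, ∑ j, S i j * (x i - x j) ^ 2
      = ∑ i, ∑ j, (S i j * x i ^ 2 + S i j * x j ^ 2 - 2 * (x i * S i j * x j)) := by
        congr! 2 with i _ j _; ring
    _ = -2 * (x ⬝ᵥ S *ᵥ x) := by
        simp only [Finset.sum_add_distrib, Finset.sum_sub_distrib, ← Finset.mul_sum]
        rw [hleft, hright, hcross]; ring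

theorem sum_mul_mul_sub_sq_nonneg {B : Matrix ι ι ℝ} {v : ι → ℝ} (hB : ∀ i j, i ≠ j → 0 ≤ B i j)
    (hv : ∀ i, 0 ≤ v i) (x : ι → ℝ) : 0 ≤ ∑ i, ∑ j, B i j * v i * (x i - x j) ^ 2 := by
  refine Finset.sum_nonneg fun i _ => Finset.sum_nonneg fun j _ => ?_
  rcases eq_or_ne i j with rfl | hij
  · simp
  · exact mul_nonneg (mul_nonneg (hB i j hij) (hv i)) (sq_nonneg _)

variable [DecidableEq ι]

theorem dotProduct_diagonal_mulVec_self (v x : ι → ℝ) :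
    x ⬝ᵥ diagonal v *ᵥ x = ∑ i, v i * x i ^ 2 := by
  simp only [dotProduct, mulVec_diagonal]
  congr! 1 with i
  ring

theorem eigenvalue_deriv_eq_neg_div {A B : Matrix ι ι ℝ} {v : ι → ℝ} {ρ : ℝ → ℝ}
    {x : ℝ → ι → ℝ} {ρ' : ℝ} {x' : ι → ℝ} {k : ℝ} (hv : ∀ i, 0 < v i) (hxk : x k ≠ 0)
    (hB : (diagonal v * B).IsSymm) (hBrow : ∀ i, ∑ j, B i j = 0)
    (hWM : (diagonal v * (A + k • B)).IsSymm) (heig : ∀ t, (A + t • B) *ᵥ x t = ρ t • x t)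
    (hρ : HasDerivAt ρ ρ' k) (hx : HasDerivAt x x' k) :
    ρ' = -((∑ i, ∑ j, B i j * v i * (x k i - x k j) ^ 2) / 2) / ∑ i, v i * x k i ^ 2 := by
  have hvar := eigenvalue_deriv_mul_dotProduct (isSymm_diagonal v) hWM heig hρ hx
  have hquad := sum_mul_sub_sq_eq_neg_two_mul_dotProduct hB
    (fun i => by simp only [diagonal_mul, ← Finset.mul_sum, hBrow, mul_zero]) (x k)
  have hnum : ∑ i, ∑ j, B i j * v i * (x k i - x k j) ^ 2 =
      ∑ i, ∑ j, (diagonal v * B) i j * (x k i - x k j) ^ 2 := by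
    simp only [diagonal_mul, mul_comm (v _)]
  obtain ⟨i₀, hi₀⟩ : ∃ i, x k i ≠ 0 := Function.ne_iff.1 hxk
  have hden_pos : 0 < ∑ i, v i * x k i ^ 2 :=
    Finset.sum_pos' (fun i _ => by have := hv i; positivity)
      ⟨i₀, Finset.mem_univ _, by have := hv i₀; positivity⟩
  rw [hnum, eq_div_iff hden_pos.ne', ← dotProduct_diagonal_mulVec_self]
  rw [← dotProduct_diagonal_mulVec_self] at hden_pos
  linarith

end Matrix

section LevelWeights

variable {ι : Type*} {f : ι → ℕ}

theorem isSymm_of_level {E : Matrix ι ι ℝ}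
    (hsame : ∀ i j, i ≠ j → f i = f j → E i j = E j i)
    (hdiff : ∀ i j, i ≠ j → f i ≠ f j → E i j = 0 ∧ E j i = 0) : E.IsSymm := by
  refine IsSymm.ext fun i j => ?_
  rcases eq_or_ne j i with rfl | hji
  · rfl
  by_cases hf : f j = f i
  · exact hsame j i hji hf
  · rw [(hdiff j i hji hf).1, (hdiff j i hji hf).2]

variable [Fintype ι] [DecidableEq ι]

theorem isSymm_diagonal_pow_mul_of_level (c : ℝ) {E : Matrix ι ι ℝ} (hE : E.IsSymm)
    (hlevel : ∀ i j, f i ≠ f j → E i j = 0) : (diagonal (fun i => c ^ f i) * E).IsSymm := by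
  refine IsSymm.ext fun i j => ?_
  rw [diagonal_mul, diagonal_mul]
  by_cases hf : f j = f i
  · rw [hf, hE.apply]
  · rw [hlevel j i hf, hlevel i j (Ne.symm hf), mul_zero, mul_zero]

/-- The weights `(d / (d + q)) ^ f i` turn the upstream weight `d` and the downstream weight
`d + q` of every edge into the same number. -/
theorem isSymm_diagonal_pow_mul_of_flow {d q : ℝ} (hdq : d + q ≠ 0) {L : Matrix ι ι ℝ}
    (hL : ∀ i j, i ≠ j →
      (L i j = 0 ∧ L j i = 0) ∨
      (f j = f i + 1 ∧ L j i = d + q ∧ L i j = d) ∨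
      (f i = f j + 1 ∧ L i j = d + q ∧ L j i = d)) :
    (diagonal (fun i => (d / (d + q)) ^ f i) * L).IsSymm := by
  refine IsSymm.ext fun i j => ?_
  rw [diagonal_mul, diagonal_mul]
  rcases eq_or_ne i j with rfl | hij
  · rfl
  rcases hL i j hij with ⟨hij0, hji0⟩ | ⟨hf, hji, hij'⟩ | ⟨hf, hij', hji⟩
  · rw [hij0, hji0, mul_zero, mul_zero]
  · rw [hf, hji, hij', pow_succ]
    field_simp
  · rw [hf, hji, hij', pow_succ]
    field_simp

end LevelWeights

theorem rho_deriv_homogeneous_flow_bidir_general {n : ℕ} (hn : 0 < n)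
    (d q : ℝ) (hd : 0 < d) (hq : 0 < q)
    (f : Fin n → ℕ)
    (L : Matrix (Fin n) (Fin n) ℝ)
    (hL : ∀ i j : Fin n, i ≠ j →
      (L i j = 0 ∧ L j i = 0) ∨
      (f j = f i + 1 ∧ L j i = d + q ∧ L i j = d) ∨
      (f i = f j + 1 ∧ L i j = d + q ∧ L j i = d))
    (E : Matrix (Fin n) (Fin n) ℝ)
    (hEcol : ∀ j, ∑ i, E i j = 0)
    (hEsame : ∀ i j : Fin n, i ≠ j → f i = f j →
      E i j = E j i ∧ (E i j = 0 ∨ E i j = 1))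
    (hEdiff : ∀ i j : Fin n, i ≠ j → f i ≠ f j → E i j = 0 ∧ E j i = 0)
    (r : Fin n → ℝ)
    (ρ ρ' : ℝ → ℝ) (x x' : ℝ → Fin n → ℝ)
    (hx : ∀ k i, 0 < x k i)
    (heig : ∀ k : ℝ, (L + k • E + Matrix.diagonal r).mulVec (x k) = ρ k • x k)
    (hρ' : ∀ k : ℝ, HasDerivAt ρ (ρ' k) k)
    (hx' : ∀ (k : ℝ) (i : Fin n), HasDerivAt (fun t => x t i) (x' k i) k) :
    ∀ k : ℝ, 0 ≤ k →
      ρ' k = -((∑ i, ∑ j, E i j * (d / (d + q)) ^ f i * (x k i - x k j) ^ 2) / 2) /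
          (∑ i, (d / (d + q)) ^ f i * (x k i) ^ 2) ∧
        ρ' k ≤ 0 := by
  intro k _
  set c := d / (d + q)
  have hE : E.IsSymm := isSymm_of_level (fun i j h h' => (hEsame i j h h').1) hEdiff
  have hWE : (diagonal (fun i => c ^ f i) * E).IsSymm := isSymm_diagonal_pow_mul_of_level c hE
    fun i j hf => (hEdiff i j (ne_of_apply_ne f hf) hf).1
  have hWM : (diagonal (fun i => c ^ f i) * (L + diagonal r + k • E)).IsSymm := by
    rw [mul_add, mul_add, Matrix.mul_smul, diagonal_mul_diagonal]
    exact ((isSymm_diagonal_pow_mul_of_flow (by positivity) hL).add (isSymm_diagonal _)).add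
      (hWE.smul k)
  have hformula := eigenvalue_deriv_eq_neg_div (fun i => by positivity)
    (fun h => (hx k ⟨0, hn⟩).ne' (congrFun h _)) hWE
    (fun i => (Finset.sum_congr rfl fun j _ => hE.apply j i).trans (hEcol i)) hWM
    (fun t => by rw [add_right_comm]; exact heig t) (hρ' k) (hasDerivAt_pi.2 (hx' k))
  have hE_nonneg : ∀ i j, i ≠ j → 0 ≤ E i j := fun i j hij => by
    by_cases hf : f i = f j
    · rcases (hEsame i j hij hf).2 with h | h <;> simp [h]
    · exact (hEdiff i j hij hf).1.ge
  refine ⟨hformula, hformula ▸ div_nonpos_of_nonpos_of_nonneg ?_ ?_⟩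
  · linarith [sum_mul_mul_sub_sq_nonneg (v := fun i => c ^ f i) hE_nonneg
      (fun i => by positivity) (x k)]
  · exact Finset.sum_nonneg fun i _ => by positivity

/-- For a homogeneous flow stream network with irreducible
connection matrix `L` and an edge-modification matrix `E` adding bi-directional
edges only within levels (assumption (A4), with entries `0` or `1` as
indicators of added edges), the spectral bound `ρ(k) = s(L + kE + R)` satisfies
`ρ'(k) = −(Σ_{(i,j)∈S} (d/(d+q))^{f(i)} (x_i − x_j)²)/(Σ_i (d/(d+q))^{f(i)} x_i²) ≤ 0`,
where the sum over the set `S` of unordered added pairs is written as half the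
ordered double sum weighted by the indicator entries of `E`. -/
theorem rho_deriv_homogeneous_flow_bidir {n : ℕ} (hn : 0 < n)
    (d q : ℝ) (hd : 0 < d) (hq : 0 < q)
    (f : Fin n → ℕ)
    (hattain : ∀ (i : Fin n) (m : ℕ), m ≤ f i → ∃ j, f j = m)
    (L : Matrix (Fin n) (Fin n) ℝ)
    (hLcol : ∀ j, ∑ i, L i j = 0)
    (hL : ∀ i j : Fin n, i ≠ j →
      (L i j = 0 ∧ L j i = 0) ∨
      (f j = f i + 1 ∧ L j i = d + q ∧ L i j = d) ∨
      (f i = f j + 1 ∧ L i j = d + q ∧ L j i = d))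
    (hirr : MatIrreducible L)
    (E : Matrix (Fin n) (Fin n) ℝ)
    (hEcol : ∀ j, ∑ i, E i j = 0)
    (hEsame : ∀ i j : Fin n, i ≠ j → f i = f j →
      E i j = E j i ∧ (E i j = 0 ∨ E i j = 1))
    (hEdiff : ∀ i j : Fin n, i ≠ j → f i ≠ f j → E i j = 0 ∧ E j i = 0)
    (r : Fin n → ℝ) (hr : ∀ i, 0 ≤ r i)
    (ρ ρ' : ℝ → ℝ) (x x' : ℝ → Fin n → ℝ)
    (hx : ∀ k i, 0 < x k i)
    (hρspec : ∀ k : ℝ, 0 ≤ k →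
      ρ k = specBound (L + k • E + Matrix.diagonal r))
    (heig : ∀ k : ℝ, (L + k • E + Matrix.diagonal r).mulVec (x k) = ρ k • x k)
    (hρ' : ∀ k : ℝ, HasDerivAt ρ (ρ' k) k)
    (hx' : ∀ (k : ℝ) (i : Fin n), HasDerivAt (fun t => x t i) (x' k i) k) :
    ∀ k : ℝ, 0 ≤ k →
      ρ' k = -((∑ i, ∑ j, E i j * (d / (d + q)) ^ f i * (x k i - x k j) ^ 2) / 2) /
          (∑ i, (d / (d + q)) ^ f i * (x k i) ^ 2) ∧
        ρ' k ≤ 0 :=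
  rho_deriv_homogeneous_flow_bidir_general hn d q hd hq f L hL E hEcol hEsame hEdiff r ρ ρ' x x' hx
    heig hρ' hx'
end
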